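/- For every n ≥ 0, Bⁿ = Σ_{m=0}^{⌊n/2⌋} [n−2m]! · ( Σ_{α ∈ 𝒫_t(m×(n−2m))} [α₁+1]²·[α₂+1]²⋯[α_m+1]² ) · P_{n−2m} in Uⁱ. -/

import Mathlib

/-!
Setting: `K = ℚ(q)` is the field of rational functions over `ℚ`; `U⁻ = ℚ(q)[F]` and
`Uⁱ = ℚ(q)[B]` are both realized as `Polynomial K`, with `F` resp. `B` the variable
`Polynomial.X`.
-/

noncomputable section

abbrev K : Type := RatFunc ℚ

/-- The variable `q` of `ℚ(q)`. -/
def q : K := RatFunc.X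

/-- The quantum integer `[n] = (qⁿ - q⁻ⁿ)/(q - q⁻¹)`. -/
def qint (n : ℕ) : K := (q ^ n - q⁻¹ ^ n) / (q - q⁻¹)

/-- The quantum factorial `[n]! = [1][2]⋯[n]`, `[0]! = 1`. -/
def qfact : ℕ → K
  | 0 => 1
  | n + 1 => qfact n * qint (n + 1)

/-- The ı-canonical basis elements `Pₙ ∈ Uⁱ` (for the parameter `t ∈ {0,1}`): `P₀ = 1` and
`[n+1]·P_{n+1} = B·Pₙ − δ_{n≡t}·[n]·P_{n−1}` for `n ≥ 0`, interpreting `P₋₁ = 0`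
(for `n = 0` the last term vanishes as `[0] = 0`). -/
def Pel (t : ℕ) : ℕ → Polynomial K
  | 0 => 1
  | 1 => (qint 1)⁻¹ • (Polynomial.X : Polynomial K)
  | n + 2 => (qint (n + 2))⁻¹ •
      (Polynomial.X * Pel t (n + 1) -
        (if (n + 1) % 2 = t % 2 then qint (n + 1) else 0) • Pel t n)

lemma q_ne_zero : q ≠ 0 := RatFunc.X_ne_zero

lemma q_pow_ne_one {n : ℕ} (hn : n ≠ 0) : q ^ n ≠ 1 := by
  intro h
  have : (RatFunc.X : RatFunc ℚ) ^ n = 1 := h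
  rw [show (RatFunc.X : RatFunc ℚ) = algebraMap (Polynomial ℚ) _ Polynomial.X from rfl,
    ← map_pow, show (1 : RatFunc ℚ) = algebraMap (Polynomial ℚ) _ 1 from (map_one _).symm] at this
  have h2 := IsFractionRing.injective (Polynomial ℚ) (RatFunc ℚ) this
  have := congrArg Polynomial.natDegree h2
  simp [Polynomial.natDegree_X_pow] at this
  exact hn this

lemma qsub_ne : q - q⁻¹ ≠ 0 := by
  intro h
  have h1 : q = q⁻¹ := sub_eq_zero.mp h
  have : q ^ 2 = 1 := by
    rw [pow_two]; nth_rewrite 2 [h1]; exact mul_inv_cancel₀ q_ne_zero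
  exact q_pow_ne_one (by norm_num) this

lemma qint_ne_zero {n : ℕ} (hn : n ≠ 0) : qint n ≠ 0 := by
  unfold qint
  apply div_ne_zero _ qsub_ne
  intro h
  have h1 : q ^ n = q⁻¹ ^ n := sub_eq_zero.mp h
  have : q ^ (2 * n) = 1 := by
    rw [two_mul, pow_add]; nth_rewrite 2 [h1]
    rw [← mul_pow, mul_inv_cancel₀ q_ne_zero, one_pow]
  exact q_pow_ne_one (by omega) this

lemma qint_zero : qint 0 = 0 := by simp [qint]

lemma qint_one : qint 1 = 1 := by simp [qint, div_self qsub_ne]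

lemma X_mul_Pel (t k : ℕ) :
    Polynomial.X * Pel t k =
      qint (k + 1) • Pel t (k + 1) +
        (if k % 2 = t % 2 then qint k else 0) • Pel t (k - 1) := by
  match k with
  | 0 =>
    simp [Pel, qint_zero, qint_one, smul_smul]
  | j + 1 =>
    have h : qint (j + 2) ≠ 0 := qint_ne_zero (by omega)
    have e : qint (j + 2) • Pel t (j + 2) =
        Polynomial.X * Pel t (j + 1) -
          (if (j + 1) % 2 = t % 2 then qint (j + 1) else 0) • Pel t j := by
      rw [show Pel t (j + 2) = (qint (j + 2))⁻¹ •
        (Polynomial.X * Pel t (j + 1) -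
          (if (j + 1) % 2 = t % 2 then qint (j + 1) else 0) • Pel t j) from rfl]
      rw [smul_smul, mul_inv_cancel₀ h, one_smul]
    show Polynomial.X * Pel t (j + 1) =
      qint (j + 2) • Pel t (j + 2) +
        (if (j + 1) % 2 = t % 2 then qint (j + 1) else 0) • Pel t j
    rw [e]; abel

def S (t m N : ℕ) : K :=
  ∑ α ∈ (Finset.univ : Finset (Fin m → Fin (N + 1))).filter
      (fun α => (∀ i j, i ≤ j → α i ≤ α j) ∧ ∀ i, (α i : ℕ) % 2 ≠ t % 2),
    ∏ i, qint ((α i : ℕ) + 1) ^ 2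

lemma S_zero (t N : ℕ) : S t 0 N = 1 := by
  unfold S
  rw [Finset.filter_true_of_mem (fun α _ => ⟨fun i => i.elim0, fun i => i.elim0⟩)]
  simp

lemma S_zero_odd (t m : ℕ) (ht : t % 2 = 1) : S t m 0 = 1 := by
  unfold S
  rw [Finset.filter_true_of_mem]
  · rw [show (Finset.univ : Finset (Fin m → Fin 1)) = {fun _ => 0} from by
      apply Finset.eq_singleton_iff_unique_mem.mpr
      refine ⟨Finset.mem_univ _, fun α _ => funext fun i => Fin.ext ?_⟩
      have := (α i).isLt; omega]
    simp [qint_one]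
  · intro α _
    refine ⟨fun i j _ => Fin.le_def.mpr ?_, fun i => ?_⟩
    · have := (α i).isLt; have := (α j).isLt; omega
    · have := (α i).isLt; omega

lemma S_zero_even (t m : ℕ) (ht : t % 2 = 0) (hm : 0 < m) : S t m 0 = 0 := by
  unfold S
  rw [Finset.filter_false_of_mem, Finset.sum_empty]
  intro α _
  rintro ⟨-, hpar⟩
  have h := hpar ⟨0, hm⟩
  have : (α ⟨0, hm⟩ : ℕ) = 0 := by omega
  omega

lemma S_stab (t m N : ℕ) (hp : (N + 1) % 2 = t % 2) : S t m (N + 1) = S t m N := by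
  unfold S
  refine Finset.sum_nbij'
    (i := fun α k => (⟨min (α k : ℕ) N, by omega⟩ : Fin (N + 1)))
    (j := fun β k => (Fin.castLE (by omega) (β k))) ?_ ?_ ?_ ?_ ?_
  · intro α hα
    simp only [Finset.mem_filter, Finset.mem_univ, true_and] at hα ⊢
    obtain ⟨hmono, hpar⟩ := hα
    have hle : ∀ k, (α k : ℕ) ≤ N := by
      intro k
      have h1 := (α k).isLt
      have h2 := hpar k
      omega
    refine ⟨fun a b hab => ?_, fun k => ?_⟩
    · have h3 := hmono a b hab
      rw [Fin.le_def] at h3 ⊢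
      show min (α a : ℕ) N ≤ min (α b : ℕ) N
      omega
    · show min (α k : ℕ) N % 2 ≠ t % 2
      have := hpar k; have := hle k; omega
  · intro β hβ
    simp only [Finset.mem_filter, Finset.mem_univ, true_and] at hβ ⊢
    obtain ⟨hmono, hpar⟩ := hβ
    refine ⟨fun a b hab => ?_, fun k => ?_⟩
    · have h3 := hmono a b hab
      rw [Fin.le_def] at h3 ⊢
      exact h3
    · exact hpar k
  · intro α hα
    simp only [Finset.mem_filter, Finset.mem_univ, true_and] at hα
    obtain ⟨hmono, hpar⟩ := hα
    have hle : ∀ k, (α k : ℕ) ≤ N := by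
      intro k
      have h1 := (α k).isLt
      have h2 := hpar k
      omega
    funext k
    apply Fin.ext
    show min (α k : ℕ) N = (α k : ℕ)
    exact Nat.min_eq_left (hle k)
  · intro β hβ
    funext k
    apply Fin.ext
    show min ((β k : ℕ)) N = (β k : ℕ)
    have := (β k).isLt
    omega
  · intro α hα
    simp only [Finset.mem_filter, Finset.mem_univ, true_and] at hα
    obtain ⟨hmono, hpar⟩ := hα
    have hle : ∀ k, (α k : ℕ) ≤ N := by
      intro k
      have h1 := (α k).isLt
      have h2 := hpar k
      omega
    apply Finset.prod_congr rfl
    intro k _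
    show qint ((α k : ℕ) + 1) ^ 2 = qint (min (α k : ℕ) N + 1) ^ 2
    rw [Nat.min_eq_left (hle k)]

lemma S_rec (t m N : ℕ) (hp : (N + 1) % 2 ≠ t % 2) :
    S t (m + 1) (N + 1) = S t (m + 1) N + qint (N + 2) ^ 2 * S t m (N + 1) := by
  conv_lhs => rw [S]
  rw [← Finset.sum_filter_add_sum_filter_not _ (fun α => α (Fin.last m) = Fin.last (N + 1))]
  rw [add_comm]
  congr 1
  · -- non-maximal part = S t (m+1) N
    rw [S]
    refine Finset.sum_nbij'
      (i := fun α k => (⟨min (α k : ℕ) N, by omega⟩ : Fin (N + 1)))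
      (j := fun β k => (Fin.castLE (by omega) (β k))) ?_ ?_ ?_ ?_ ?_
    · intro α hα
      simp only [Finset.mem_filter, Finset.mem_univ, true_and] at hα ⊢
      obtain ⟨⟨hmono, hpar⟩, hne⟩ := hα
      have hle : ∀ k, (α k : ℕ) ≤ N := by
        intro k
        have h1 := hmono k (Fin.last m) (Fin.le_last k)
        rw [Fin.le_def] at h1
        have h2 := (α (Fin.last m)).isLt
        have h3 : (α (Fin.last m) : ℕ) ≠ N + 1 := fun h => hne (Fin.ext h)
        omega
      refine ⟨fun a b hab => ?_, fun k => ?_⟩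
      · have h3 := hmono a b hab
        rw [Fin.le_def] at h3 ⊢
        show min (α a : ℕ) N ≤ min (α b : ℕ) N
        omega
      · show min (α k : ℕ) N % 2 ≠ t % 2
        have := hpar k; have := hle k; omega
    · intro β hβ
      simp only [Finset.mem_filter, Finset.mem_univ, true_and] at hβ ⊢
      obtain ⟨hmono, hpar⟩ := hβ
      refine ⟨⟨fun a b hab => ?_, fun k => ?_⟩, fun h => ?_⟩
      · have h3 := hmono a b hab
        rw [Fin.le_def] at h3 ⊢
        exact h3
      · exact hpar k
      · have := congrArg Fin.val h
        have h2 := (β (Fin.last m)).isLt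
        simp only [Fin.coe_castLE, Fin.val_last] at this
        omega
    · intro α hα
      simp only [Finset.mem_filter, Finset.mem_univ, true_and] at hα
      obtain ⟨⟨hmono, hpar⟩, hne⟩ := hα
      have hle : ∀ k, (α k : ℕ) ≤ N := by
        intro k
        have h1 := hmono k (Fin.last m) (Fin.le_last k)
        rw [Fin.le_def] at h1
        have h2 := (α (Fin.last m)).isLt
        have h3 : (α (Fin.last m) : ℕ) ≠ N + 1 := fun h => hne (Fin.ext h)
        omega
      funext k
      apply Fin.ext
      show min (α k : ℕ) N = (α k : ℕ)
      exact Nat.min_eq_left (hle k)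
    · intro β hβ
      funext k
      apply Fin.ext
      show min ((β k : ℕ)) N = (β k : ℕ)
      have := (β k).isLt
      omega
    · intro α hα
      simp only [Finset.mem_filter, Finset.mem_univ, true_and] at hα
      obtain ⟨⟨hmono, hpar⟩, hne⟩ := hα
      have hle : ∀ k, (α k : ℕ) ≤ N := by
        intro k
        have h1 := hmono k (Fin.last m) (Fin.le_last k)
        rw [Fin.le_def] at h1
        have h2 := (α (Fin.last m)).isLt
        have h3 : (α (Fin.last m) : ℕ) ≠ N + 1 := fun h => hne (Fin.ext h)
        omega
      apply Finset.prod_congr rfl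
      intro k _
      show qint ((α k : ℕ) + 1) ^ 2 = qint (min (α k : ℕ) N + 1) ^ 2
      rw [Nat.min_eq_left (hle k)]
  · -- maximal part = qint (N+2)^2 * S t m (N+1)
    rw [S, Finset.mul_sum]
    refine Finset.sum_nbij'
      (i := fun α k => α (Fin.castSucc k))
      (j := fun β => Fin.snoc β (Fin.last (N + 1))) ?_ ?_ ?_ ?_ ?_
    · intro α hα
      simp only [Finset.mem_filter, Finset.mem_univ, true_and] at hα ⊢
      obtain ⟨⟨hmono, hpar⟩, hlast⟩ := hα
      exact ⟨fun a b hab => hmono _ _ (Fin.castSucc_le_castSucc_iff.mpr hab),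
        fun k => hpar _⟩
    · intro β hβ
      simp only [Finset.mem_filter, Finset.mem_univ, true_and] at hβ ⊢
      obtain ⟨hmono, hpar⟩ := hβ
      refine ⟨⟨fun a b hab => ?_, fun k => ?_⟩, Fin.snoc_last _ _⟩
      · rcases Fin.eq_castSucc_or_eq_last b with ⟨b', rfl⟩ | rfl
        · rcases Fin.eq_castSucc_or_eq_last a with ⟨a', rfl⟩ | rfl
          · rw [Fin.snoc_castSucc, Fin.snoc_castSucc]
            exact hmono _ _ (Fin.castSucc_le_castSucc_iff.mp hab)
          · have : Fin.castSucc b' = Fin.last m := le_antisymm (Fin.le_last _) hab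
            rw [this]
        · rw [Fin.snoc_last]
          exact Fin.le_last _
      · rcases Fin.eq_castSucc_or_eq_last k with ⟨k', rfl⟩ | rfl
        · rw [Fin.snoc_castSucc]; exact hpar _
        · rw [Fin.snoc_last]
          simpa using hp
    · intro α hα
      simp only [Finset.mem_filter, Finset.mem_univ, true_and] at hα
      obtain ⟨⟨hmono, hpar⟩, hlast⟩ := hα
      funext k
      rcases Fin.eq_castSucc_or_eq_last k with ⟨k', rfl⟩ | rfl
      · simp [Fin.snoc_castSucc]
      · simp [Fin.snoc_last, hlast]
    · intro β hβ
      funext k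
      simp [Fin.snoc_castSucc]
    · intro α hα
      simp only [Finset.mem_filter, Finset.mem_univ, true_and] at hα
      obtain ⟨⟨hmono, hpar⟩, hlast⟩ := hα
      rw [Fin.prod_univ_castSucc, hlast]
      simp [mul_comm]

def c (t : ℕ) : ℕ → ℕ → K
  | 0, k => if k = 0 then 1 else 0
  | n + 1, k =>
      (match k with
        | 0 => 0
        | k' + 1 => c t n k' * qint (k' + 1)) +
      c t n (k + 1) * (if (k + 1) % 2 = t % 2 then qint (k + 1) else 0)

lemma c_zero_apply (t k : ℕ) : c t 0 k = if k = 0 then 1 else 0 := rfl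

lemma c_succ_zero (t n : ℕ) :
    c t (n + 1) 0 = c t n 1 * (if 1 % 2 = t % 2 then qint 1 else 0) := by
  show (0 : K) + _ = _
  rw [zero_add]

lemma c_succ_succ (t n k : ℕ) :
    c t (n + 1) (k + 1) = c t n k * qint (k + 1) +
      c t n (k + 2) * (if (k + 2) % 2 = t % 2 then qint (k + 2) else 0) := rfl

lemma c_gt (t : ℕ) : ∀ n k, n < k → c t n k = 0 := by
  intro n
  induction n with
  | zero => intro k hk; rw [c_zero_apply]; simp; omega
  | succ n ih =>
    intro k hk
    match k with
    | k' + 1 =>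
      rw [c_succ_succ, ih k' (by omega), ih (k' + 2) (by omega)]
      ring

lemma c_parity (t : ℕ) : ∀ n k, (n + k) % 2 = 1 → c t n k = 0 := by
  intro n
  induction n with
  | zero => intro k hk; rw [c_zero_apply]; simp; omega
  | succ n ih =>
    intro k hk
    match k with
    | 0 =>
      rw [c_succ_zero, ih 1 (by omega)]
      ring
    | k' + 1 =>
      rw [c_succ_succ, ih k' (by omega), ih (k' + 2) (by omega)]
      ring

lemma qfact_succ (k : ℕ) : qfact (k + 1) = qfact k * qint (k + 1) := rfl

lemma c_val (t : ℕ) : ∀ n m k, n = k + 2 * m → c t n k = qfact k * S t m k := by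
  intro n
  induction n with
  | zero =>
    intro m k h
    have hk : k = 0 := by omega
    have hm : m = 0 := by omega
    subst hk; subst hm
    rw [c_zero_apply, S_zero]
    simp [qfact]
  | succ n ih =>
    intro m k h
    match k with
    | 0 =>
      match m with
      | m' + 1 =>
        have hn : n = 1 + 2 * m' := by omega
        rw [c_succ_zero, ih m' 1 hn]
        rw [show qfact 1 = 1 from by rw [qfact_succ, qint_one]; simp [qfact]]
        rcases Nat.mod_two_eq_zero_or_one t with ht | ht
        · rw [if_neg (by omega), S_zero_even t (m' + 1) ht (by omega)]
          ring
        · rw [if_pos (by omega), qint_one, S_zero_odd t (m' + 1) ht,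
            show (1 : ℕ) = 0 + 1 from rfl, S_stab t m' 0 (by omega), S_zero_odd t m' ht]
          simp [qfact]
    | k' + 1 =>
      have hn : n = k' + 2 * m := by omega
      rw [c_succ_succ, ih m k' hn]
      match m with
      | 0 =>
        rw [c_gt t n (k' + 2) (by omega), S_zero, S_zero, qfact_succ]
        ring
      | m'' + 1 =>
        have hn2 : n = (k' + 2) + 2 * m'' := by omega
        rw [ih m'' (k' + 2) hn2]
        by_cases hpar : (k' + 1) % 2 = t % 2
        · rw [if_neg (by omega), S_stab t (m'' + 1) k' hpar, qfact_succ k']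
          ring
        · rw [if_pos (by omega), S_rec t m'' k' hpar,
            show k' + 2 = (k' + 1) + 1 from rfl, S_stab t m'' (k' + 1) (by omega)]
          rw [qfact_succ (k' + 1), qfact_succ k']
          ring

lemma delta_zero (t : ℕ) : (if 0 % 2 = t % 2 then qint 0 else 0) = 0 := by
  split <;> simp [qint_zero]

lemma expand (t : ℕ) (n : ℕ) :
    (Polynomial.X : Polynomial K) ^ n = ∑ k ∈ Finset.range (n + 1), c t n k • Pel t k := by
  induction n with
  | zero => simp [c_zero_apply]; rfl
  | succ n ih =>
    have step : (Polynomial.X : Polynomial K) ^ (n + 1) =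
        ∑ k ∈ Finset.range (n + 1),
          (c t n k • (qint (k + 1) • Pel t (k + 1)) +
            c t n k • ((if k % 2 = t % 2 then qint k else 0) • Pel t (k - 1))) := by
      rw [pow_succ, mul_comm, ih, Finset.mul_sum]
      apply Finset.sum_congr rfl
      intro k _
      rw [mul_smul_comm, X_mul_Pel, smul_add]
    rw [step, Finset.sum_add_distrib]
    have h1 : ∑ k ∈ Finset.range (n + 1), c t n k • (qint (k + 1) • Pel t (k + 1)) =
        ∑ k ∈ Finset.range (n + 2),
          (if k = 0 then (0 : K) else c t n (k - 1) * qint k) • Pel t k := by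
      conv_rhs => rw [Finset.sum_range_succ']
      simp only [Nat.add_sub_cancel, if_neg (Nat.succ_ne_zero _), if_pos rfl, zero_smul,
        add_zero, smul_smul]
      simp
    have h2 : ∑ k ∈ Finset.range (n + 1),
          c t n k • ((if k % 2 = t % 2 then qint k else 0) • Pel t (k - 1)) =
        ∑ k ∈ Finset.range (n + 2),
          (c t n (k + 1) * (if (k + 1) % 2 = t % 2 then qint (k + 1) else 0)) • Pel t k := by
      conv_rhs => rw [Finset.sum_range_succ, Finset.sum_range_succ]
      rw [c_gt t n (n + 2) (by omega), c_gt t n (n + 1) (by omega)]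
      simp only [zero_mul, zero_smul, add_zero]
      conv_lhs => rw [Finset.sum_range_succ']
      simp only [Nat.add_sub_cancel, delta_zero, zero_smul, smul_zero, add_zero, smul_smul]
    rw [h1, h2, ← Finset.sum_add_distrib]
    apply Finset.sum_congr rfl
    intro k _
    rw [← add_smul]
    congr 1
    match k with
    | 0 => rw [c_succ_zero, if_pos rfl, zero_add]
    | k' + 1 => rw [c_succ_succ, if_neg (Nat.succ_ne_zero _), Nat.add_sub_cancel]

/-- for every `n ≥ 0`,
`Bⁿ = Σ_{m=0}^{⌊n/2⌋} [n−2m]!·(Σ_{α ∈ 𝒫_t(m×(n−2m))} [α₁+1]²⋯[α_m+1]²)·P_{n−2m}`,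
where `𝒫_t(m×N)` is the set of weakly increasing tuples `α ∈ ℕᵐ` with entries in
`{0,…,N}` and `αᵢ ≢ t (mod 2)` for all `i` (encoded below as monotone functions
`Fin m → Fin (N+1)`). -/
theorem stmt17 (t : ℕ) (ht : t = 0 ∨ t = 1) (n : ℕ) :
    (Polynomial.X : Polynomial K) ^ n =
      ∑ m ∈ Finset.range (n / 2 + 1),
        (qfact (n - 2 * m) *
            ∑ α ∈ (Finset.univ : Finset (Fin m → Fin (n - 2 * m + 1))).filter
                (fun α => (∀ i j, i ≤ j → α i ≤ α j) ∧ ∀ i, (α i : ℕ) % 2 ≠ t % 2),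
              ∏ i, qint ((α i : ℕ) + 1) ^ 2) • Pel t (n - 2 * m) := by
  rw [expand t n]
  have key : ∑ k ∈ Finset.range (n + 1), c t n k • Pel t k =
      ∑ m ∈ Finset.range (n / 2 + 1), c t n (n - 2 * m) • Pel t (n - 2 * m) := by
    rw [← Finset.sum_image (f := fun k => c t n k • Pel t k)
      (s := Finset.range (n / 2 + 1)) (g := fun m => n - 2 * m)
      (by intro x hx y hy hxy
          simp only at hxy
          rw [Finset.mem_coe, Finset.mem_range] at hx hy
          omega)]
    apply (Finset.sum_subset ?_ ?_).symm
    · intro k hk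
      rw [Finset.mem_image] at hk
      obtain ⟨m, hm, rfl⟩ := hk
      rw [Finset.mem_range] at hm ⊢
      omega
    · intro k hk hk2
      rw [Finset.mem_range] at hk
      rw [Finset.mem_image] at hk2
      push_neg at hk2
      have hpar : (n + k) % 2 = 1 := by
        by_contra hc
        exact absurd (by omega : n - 2 * ((n - k) / 2) = k)
          (hk2 ((n - k) / 2) (Finset.mem_range.mpr (by omega)))
      rw [c_parity t n k hpar, zero_smul]
  rw [key]
  apply Finset.sum_congr rfl
  intro m hm
  rw [Finset.mem_range] at hm
  rw [c_val t n m (n - 2 * m) (by omega)]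
  simp only [S]


end
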